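/- Let q ≥ 2 be an integer and let f be a real-valued q-additive function. Then for every real t, every integer h ≥ 1 and every integer N ≥ q^h, with L = ⌊log_q N⌋, one has |φ_N(t) − φ_{q^{L+1}}(t)| ≤ 2/q^{h−1} + 2√2 · ∑_{j=L−h+1}^{L} max_{1≤d≤q−1} (1 − cos(t·f(d q^j)))^{1/2}, where φ_M(t) = (1/M) ∑_{n<M} e^{i t f(n)}. -/

import Mathlib

open Filter Finset Topology

/-- `f : ℕ → ℝ` is `q`-additive. -/
def IsQAdditive (q : ℕ) (f : ℕ → ℝ) : Prop :=
  ∀ n : ℕ, f n = ∑ j ∈ Finset.range n, f (n / q ^ j % q * q ^ j)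

/-- Empirical characteristic function `φ_M(t) = (1/M) ∑_{n<M} e^{i t f(n)}`. -/
noncomputable def empCharFun (f : ℕ → ℝ) (M : ℕ) (t : ℝ) : ℂ :=
  (∑ n ∈ Finset.range M, Complex.exp (Complex.I * t * f n)) / M

/-!
Write `e n = exp (i t f n)`, `K = L - h + 1` and `P = q ^ K`, so that `q ^ (L + 1) = q ^ h * P`.
By `q`-additivity `e (b * P + a) = e (b * P) * e a` for `a < P`, so a sum of `e` over an initial
segment `[0, N)` with `N ≤ q ^ (L + 1)` is, up to one incomplete block of length `< P`,
a combination of the block sum `∑_{a < P} e a` with the factors `e (b * P)`, `b < q ^ h`.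
The digits of `b * P` sit in positions `K, …, L`, so `e (b * P)` is a product of `L - K + 1`
unimodular factors `e (d * q ^ j)` with `d < q`, whence
`‖e (b * P) - 1‖ ≤ √2 ∑_{j=K}^{L} max_d √(1 - cos (t f (d q ^ j)))`.
Both `φ_N` and `φ_{q ^ (L + 1)}` are therefore close to the block average, and the incomplete
block contributes at most `2 (N % P) / N ≤ 2 / q ^ (h - 1)` because `q ^ L ≤ N`.
-/

theorem digit_eq_zero_of_pow_dvd {q K c j : ℕ} (hc : q ^ K ∣ c) (hj : j < K) :
    c / q ^ j % q = 0 :=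
  Nat.mod_eq_zero_of_dvd <| Nat.dvd_div_of_mul_dvd <| (pow_succ q j ▸ pow_dvd_pow q hj).trans hc

theorem digit_add_of_lt {q K a c : ℕ} (hq : 0 < q) (ha : a < q ^ K) (hc : q ^ K ∣ c) (j : ℕ) :
    (c + a) / q ^ j % q = c / q ^ j % q + a / q ^ j % q ∧
      (c / q ^ j % q = 0 ∨ a / q ^ j % q = 0) := by
  rcases lt_or_ge j K with hjK | hKj
  · have hc0 := digit_eq_zero_of_pow_dvd hc hjK
    rw [Nat.add_div_of_dvd_right ((pow_dvd_pow q hjK.le).trans hc), Nat.add_mod, hc0]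
    simp
  · have ha0 : a / q ^ j = 0 := Nat.div_eq_of_lt (ha.trans_le (Nat.pow_le_pow_right hq hKj))
    have hsplit : ∀ x, x / q ^ j = x / q ^ K / q ^ (j - K) := fun x ↦ by
      rw [Nat.div_div_eq_div_mul, ← pow_add, Nat.add_sub_cancel' hKj]
    rw [hsplit (c + a), Nat.add_div_of_dvd_right hc, Nat.div_eq_of_lt ha, add_zero, ← hsplit, ha0]
    simp

theorem norm_prod_sub_one_le_sum {ι R : Type*} [NormedCommRing R] [NormOneClass R]
    (s : Finset ι) (z : ι → R) (hz : ∀ i ∈ s, ‖z i‖ ≤ 1) :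
    ‖∏ i ∈ s, z i - 1‖ ≤ ∑ i ∈ s, ‖z i - 1‖ := by
  classical
  induction s using Finset.induction with
  | empty => simp
  | insert a s has ih =>
    rw [prod_insert has, sum_insert has]
    have hprod : ‖∏ i ∈ s, z i‖ ≤ 1 :=
      (Finset.norm_prod_le _ _).trans (prod_le_one (fun _ _ ↦ norm_nonneg _)
        fun i hi ↦ hz i (mem_insert_of_mem hi))
    calc ‖z a * ∏ i ∈ s, z i - 1‖
        = ‖(z a - 1) * ∏ i ∈ s, z i + (∏ i ∈ s, z i - 1)‖ := by ring_nf
      _ ≤ ‖z a - 1‖ * ‖∏ i ∈ s, z i‖ + ‖∏ i ∈ s, z i - 1‖ :=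
        (norm_add_le _ _).trans (add_le_add_left (norm_mul_le _ _) _)
      _ ≤ ‖z a - 1‖ + ∑ i ∈ s, ‖z i - 1‖ := by
        gcongr
        · exact mul_le_of_le_one_right (norm_nonneg _) hprod
        · exact ih fun i hi ↦ hz i (mem_insert_of_mem hi)

theorem norm_exp_I_mul_sub_one (θ : ℝ) :
    ‖Complex.exp (Complex.I * θ) - 1‖ = √2 * √(1 - Real.cos θ) := by
  have hcos : 2 * (1 - Real.cos θ) = (2 * Real.sin (θ / 2)) ^ 2 := by
    have := Real.cos_two_mul_eq_one_sub (θ / 2)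
    rw [mul_div_cancel₀ θ two_ne_zero] at this
    rw [this]
    ring
  rw [Complex.norm_exp_I_mul_ofReal_sub_one, ← Real.sqrt_mul zero_le_two, hcos,
    Real.sqrt_sq_eq_abs, Real.norm_eq_abs]

namespace IsQAdditive

variable {q : ℕ} {f : ℕ → ℝ}

theorem map_zero (hf : IsQAdditive q f) : f 0 = 0 := by
  simpa using hf 0

theorem eq_sum_digits (hf : IsQAdditive q f) (hq : 1 < q) {m n : ℕ} (hn : n < q ^ m) :
    f n = ∑ j ∈ range m, f (n / q ^ j % q * q ^ j) := by
  have stable : ∀ k k', k ≤ k' → n < q ^ k → ∑ j ∈ range k, f (n / q ^ j % q * q ^ j) =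
      ∑ j ∈ range k', f (n / q ^ j % q * q ^ j) := by
    refine fun k k' hkk' hk ↦ sum_subset (range_subset_range.2 hkk') fun j _ hj ↦ ?_
    have : n < q ^ j := hk.trans_le (Nat.pow_le_pow_right hq.le (by simpa using hj))
    rw [Nat.div_eq_of_lt this, Nat.zero_mod, zero_mul, hf.map_zero]
  rw [hf n]
  rcases le_total n m with hnm | hmn
  · exact stable n m hnm (Nat.lt_pow_self hq)
  · exact (stable m n hmn hn).symm

theorem map_add (hf : IsQAdditive q f) (hq : 1 < q) {K a c : ℕ} (ha : a < q ^ K)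
    (hc : q ^ K ∣ c) : f (c + a) = f c + f a := by
  have hm := Nat.lt_pow_self (n := c + a) hq
  rw [hf.eq_sum_digits hq hm, hf.eq_sum_digits hq ((Nat.le_add_right c a).trans_lt hm),
    hf.eq_sum_digits hq ((Nat.le_add_left a c).trans_lt hm), ← sum_add_distrib]
  refine sum_congr rfl fun j _ ↦ ?_
  obtain ⟨hdigit, h0 | h0⟩ := digit_add_of_lt (by omega) ha hc j <;>
    simp [hdigit, h0, hf.map_zero]

theorem eq_sum_Icc_digits (hf : IsQAdditive q f) (hq : 1 < q) {K L n : ℕ}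
    (hn : n < q ^ (L + 1)) (hK : q ^ K ∣ n) (hKL : K ≤ L + 1) :
    f n = ∑ j ∈ Icc K L, f (n / q ^ j % q * q ^ j) := by
  rw [hf.eq_sum_digits hq hn, ← sum_range_add_sum_Ico _ hKL, Ico_add_one_right_eq_Icc,
    sum_eq_zero fun j hj ↦ by
      rw [digit_eq_zero_of_pow_dvd hK (mem_range.1 hj), zero_mul, hf.map_zero], zero_add]

theorem exp_map_add (hf : IsQAdditive q f) (hq : 1 < q) (t : ℝ) {K a c : ℕ} (ha : a < q ^ K)
    (hc : q ^ K ∣ c) :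
    Complex.exp (Complex.I * t * f (c + a)) =
      Complex.exp (Complex.I * t * f c) * Complex.exp (Complex.I * t * f a) := by
  rw [hf.map_add hq ha hc, Complex.ofReal_add, mul_add, Complex.exp_add]

theorem norm_exp_digit_sub_one_le (hf : IsQAdditive q f) (hq : 1 < q) (t : ℝ) (j : ℕ) {d : ℕ}
    (hd : d < q) :
    ‖Complex.exp (Complex.I * t * f (d * q ^ j)) - 1‖ ≤ √2 *
      (Ico 1 q).sup' (nonempty_Ico.mpr hq) fun d ↦ √(1 - Real.cos (t * f (d * q ^ j))) := by
  rcases Nat.eq_zero_or_pos d with rfl | hd0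
  · simp only [zero_mul, hf.map_zero, Complex.ofReal_zero, mul_zero, Complex.exp_zero, sub_self,
      norm_zero]
    exact mul_nonneg (Real.sqrt_nonneg 2) <|
      (Real.sqrt_nonneg _).trans (le_sup' (fun d ↦ √(1 - Real.cos (t * f (d * q ^ j))))
        (mem_Ico.2 ⟨le_rfl, hq⟩))
  · rw [mul_assoc, ← Complex.ofReal_mul, norm_exp_I_mul_sub_one]
    gcongr
    exact le_sup' (fun d ↦ √(1 - Real.cos (t * f (d * q ^ j)))) (mem_Ico.2 ⟨hd0, hd⟩)

theorem norm_exp_sub_one_le (hf : IsQAdditive q f) (hq : 1 < q) (t : ℝ) {K L n : ℕ}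
    (hn : n < q ^ (L + 1)) (hK : q ^ K ∣ n) (hKL : K ≤ L + 1) :
    ‖Complex.exp (Complex.I * t * f n) - 1‖ ≤ √2 * ∑ j ∈ Icc K L,
      (Ico 1 q).sup' (nonempty_Ico.mpr hq) fun d ↦ √(1 - Real.cos (t * f (d * q ^ j))) := by
  rw [hf.eq_sum_Icc_digits hq hn hK hKL, Complex.ofReal_sum, mul_sum, Complex.exp_sum, mul_sum]
  refine (norm_prod_sub_one_le_sum _ _ fun j _ ↦ ?_).trans
    (sum_le_sum fun j _ ↦ hf.norm_exp_digit_sub_one_le hq t j (Nat.mod_lt _ (by omega)))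
  rw [Complex.norm_exp]
  simp

end IsQAdditive

theorem sum_range_mul_eq_sum_sum {M : Type*} [AddCommMonoid M] (z : ℕ → M) (B P : ℕ) :
    ∑ n ∈ range (B * P), z n = ∑ b ∈ range B, ∑ a ∈ range P, z (b * P + a) := by
  induction B with
  | zero => simp
  | succ B ih => rw [Nat.succ_mul, sum_range_add, ih, sum_range_succ]

section BlockAverage

variable {z : ℕ → ℂ} {P B : ℕ} {ε : ℝ}

theorem norm_sum_range_le_of_norm_le_one (hz : ∀ n, ‖z n‖ ≤ 1) (M : ℕ) :
    ‖∑ n ∈ range M, z n‖ ≤ M :=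
  (norm_sum_le _ _).trans <| by simpa using sum_le_sum fun n (_ : n ∈ range M) ↦ hz n

theorem norm_sum_range_mul_sub_le (hz : ∀ n, ‖z n‖ ≤ 1)
    (hblock : ∀ b < B, ∀ a < P, z (b * P + a) = z (b * P) * z a)
    (hw : ∀ b < B, ‖z (b * P) - 1‖ ≤ ε) :
    ‖∑ n ∈ range (B * P), z n - B * ∑ a ∈ range P, z a‖ ≤ B * P * ε := by
  have hdiff : ∑ n ∈ range (B * P), z n - B * ∑ a ∈ range P, z a =
      ∑ b ∈ range B, (z (b * P) - 1) * ∑ a ∈ range P, z a := by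
    simp_rw [sum_range_mul_eq_sum_sum, sub_mul, sum_sub_distrib, one_mul, sum_const, card_range,
      nsmul_eq_mul, mul_sum]
    congr 1
    exact sum_congr rfl fun b hb ↦ sum_congr rfl fun a ha ↦
      hblock b (mem_range.1 hb) a (mem_range.1 ha)
  calc ‖∑ n ∈ range (B * P), z n - B * ∑ a ∈ range P, z a‖
      ≤ ∑ b ∈ range B, ‖z (b * P) - 1‖ * ‖∑ a ∈ range P, z a‖ := by
        rw [hdiff]
        exact (norm_sum_le _ _).trans_eq (by simp_rw [norm_mul])
    _ ≤ ∑ _b ∈ range B, ε * P := by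
        gcongr with b hb
        · exact (norm_nonneg _).trans (hw b (mem_range.1 hb))
        · exact hw b (mem_range.1 hb)
        · exact norm_sum_range_le_of_norm_le_one hz P
    _ = B * P * ε := by rw [sum_const, card_range, nsmul_eq_mul]; ring

theorem norm_sum_range_sub_le {N : ℕ} (hz : ∀ n, ‖z n‖ ≤ 1)
    (hblock : ∀ b < B, ∀ a < P, z (b * P + a) = z (b * P) * z a)
    (hw : ∀ b < B, ‖z (b * P) - 1‖ ≤ ε) (hN : N ≤ B * P) :
    ‖∑ n ∈ range N, z n - (N / P : ℕ) * ∑ a ∈ range P, z a‖ ≤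
      (N / P : ℕ) * P * ε + (N % P : ℕ) := by
  have hB₀ : N / P ≤ B := Nat.div_le_of_le_mul (by rw [mul_comm]; exact hN)
  have htail : #(Ico (N / P * P) N) = N % P := by
    have := Nat.div_add_mod' N P
    rw [Nat.card_Ico]
    omega
  rw [← sum_range_add_sum_Ico _ (Nat.div_mul_le_self N P), add_sub_right_comm]
  refine (norm_add_le _ _).trans (add_le_add (norm_sum_range_mul_sub_le hz
    (fun b hb ↦ hblock b (hb.trans_le hB₀)) (fun b hb ↦ hw b (hb.trans_le hB₀))) ?_)
  refine (norm_sum_le _ _).trans ?_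
  simpa [htail] using sum_le_sum fun n (_ : n ∈ Ico (N / P * P) N) ↦ hz n

theorem norm_average_sub_block_average_le {N : ℕ} (hz : ∀ n, ‖z n‖ ≤ 1)
    (hblock : ∀ b < B, ∀ a < P, z (b * P + a) = z (b * P) * z a)
    (hw : ∀ b < B, ‖z (b * P) - 1‖ ≤ ε) (hN : N ≤ B * P) (hN0 : 0 < N) :
    ‖(∑ n ∈ range N, z n) / N - (∑ a ∈ range P, z a) / P‖ ≤
      ε + 2 * (N % P : ℕ) / N := by
  have hBP : 0 < B * P := hN0.trans_le hN
  have hP : 0 < P := Nat.pos_of_mul_pos_left hBP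
  have hε : 0 ≤ ε := (norm_nonneg _).trans (hw 0 (Nat.pos_of_mul_pos_right hBP))
  have hsum := norm_sum_range_sub_le hz hblock hw hN
  have hS := norm_sum_range_le_of_norm_le_one hz P
  set T := ∑ n ∈ range N, z n
  set S := ∑ a ∈ range P, z a
  set B₀ := N / P
  set A := N % P
  have hid : T / N - S / P = (T - B₀ * S) / N - A * S / (N * P) := by
    have hNC : (N : ℂ) = B₀ * P + A := by exact_mod_cast (Nat.div_add_mod' N P).symm
    have : (N : ℂ) ≠ 0 := by exact_mod_cast hN0.ne'
    have : (P : ℂ) ≠ 0 := by exact_mod_cast hP.ne'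
    field_simp
    linear_combination (-S) * hNC
  have hNR : (0 : ℝ) < N := by exact_mod_cast hN0
  have hblocks : (B₀ * P * ε : ℝ) / N ≤ ε := by
    rw [div_le_iff₀ hNR, mul_comm ε]
    gcongr
    exact_mod_cast Nat.div_mul_le_self N P
  rw [hid]
  calc _ ≤ ‖(T - B₀ * S) / N‖ + ‖A * S / (N * P)‖ := norm_sub_le _ _
    _ ≤ (B₀ * P * ε + A) / N + A * P / (N * P) := by
        simp only [norm_div, norm_mul, Complex.norm_natCast]
        gcongr
    _ ≤ ε + 2 * A / N := by
        rw [mul_div_mul_right _ _ (by positivity : (P : ℝ) ≠ 0), add_div, two_mul, add_div]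
        linarith

theorem norm_average_sub_average_le {N : ℕ} (hz : ∀ n, ‖z n‖ ≤ 1)
    (hblock : ∀ b < B, ∀ a < P, z (b * P + a) = z (b * P) * z a)
    (hw : ∀ b < B, ‖z (b * P) - 1‖ ≤ ε) (hN : N ≤ B * P) (hN0 : 0 < N) :
    ‖(∑ n ∈ range N, z n) / N - (∑ n ∈ range (B * P), z n) / (B * P : ℕ)‖ ≤
      2 * ε + 2 * (N % P : ℕ) / N := by
  have hN_avg := norm_average_sub_block_average_le hz hblock hw hN hN0
  have hBP_avg := norm_average_sub_block_average_le hz hblock hw le_rfl (hN0.trans_le hN)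
  rw [Nat.mul_mod_left, Nat.cast_zero, mul_zero, zero_div, add_zero] at hBP_avg
  calc _ ≤ _ := norm_sub_le_norm_sub_add_norm_sub _ ((∑ a ∈ range P, z a) / P) _
    _ ≤ _ := add_le_add hN_avg ((norm_sub_rev _ _).trans_le hBP_avg)
    _ = _ := by ring

end BlockAverage

theorem natCast_mod_pow_div_le {q K m N : ℕ} (hq : 0 < q) (hN : q ^ (K + m) ≤ N) :
    ((N % q ^ K : ℕ) : ℝ) / N ≤ 1 / (q : ℝ) ^ m := by
  have hN0 : (0 : ℝ) < N := by exact_mod_cast (pow_pos hq _).trans_le hN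
  rw [div_le_div_iff₀ hN0 (by positivity), one_mul]
  have hrem : N % q ^ K * q ^ m ≤ N := calc
    _ ≤ q ^ K * q ^ m := Nat.mul_le_mul_right _ (Nat.mod_lt _ (by positivity)).le
    _ = q ^ (K + m) := (pow_add _ _ _).symm
    _ ≤ N := hN
  exact_mod_cast hrem

/-- **Delange's lemma.** For a `q`-additive `f`, all `h ≥ 1` and `N ≥ q^h`, with
`L = ⌊log_q N⌋`:
`|φ_N(t) − φ_{q^{L+1}}(t)| ≤ 2/q^{h−1} + 2√2 ∑_{j=L−h+1}^{L} max_{1≤d≤q−1} √(1 − cos(t f(d q^j)))`. -/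
theorem delange_difference_lemma (q : ℕ) (hq : 2 ≤ q) (f : ℕ → ℝ) (hf : IsQAdditive q f)
    (t : ℝ) (h : ℕ) (hh : 1 ≤ h) (N : ℕ) (hN : q ^ h ≤ N)
    (L : ℕ) (hL : L = Nat.floor (Real.logb q N)) :
    ‖empCharFun f N t - empCharFun f (q ^ (L + 1)) t‖ ≤
      2 / (q : ℝ) ^ (h - 1) +
        2 * Real.sqrt 2 * ∑ j ∈ Finset.Icc (L - h + 1) L,
          (Finset.Ico 1 q).sup' (Finset.nonempty_Ico.mpr (by omega))
            (fun d => Real.sqrt (1 - Real.cos (t * f (d * q ^ j)))) := by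
  have hq1 : 1 < q := hq
  have hN0 : 0 < N := (pow_pos (by omega) h).trans_le hN
  have hLlog : L = Nat.log q N := hL.trans (Real.natFloor_logb_natCast q N)
  have hhL : h ≤ L := hLlog ▸ (Nat.le_log_iff_pow_le hq1 hN0.ne').2 hN
  set K := L - h + 1
  have hQ : q ^ (L + 1) = q ^ h * q ^ K := by rw [← pow_add]; congr 1; omega
  have hNQ : N ≤ q ^ h * q ^ K := hQ ▸ hLlog ▸ (Nat.lt_pow_succ_log_self hq1 N).le
  have hqL : q ^ (K + (h - 1)) ≤ N := by
    rw [show K + (h - 1) = L by omega, hLlog]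
    exact Nat.pow_log_le_self q hN0.ne'
  have hw : ∀ b < q ^ h, ‖Complex.exp (Complex.I * t * f (b * q ^ K)) - 1‖ ≤
      √2 * ∑ j ∈ Icc K L,
        (Ico 1 q).sup' (nonempty_Ico.mpr hq1) fun d ↦ √(1 - Real.cos (t * f (d * q ^ j))) :=
    fun b hb ↦ hf.norm_exp_sub_one_le hq1 t
      (hQ ▸ Nat.mul_lt_mul_of_pos_right hb (by positivity)) (dvd_mul_left _ b) (by omega)
  have hdiff := norm_average_sub_average_le (z := fun n ↦ Complex.exp (Complex.I * t * f n))
    (fun n ↦ by rw [mul_assoc, ← Complex.ofReal_mul, Complex.norm_exp_I_mul_ofReal])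
    (fun b _ a ha ↦ hf.exp_map_add hq1 t ha (dvd_mul_left _ b)) hw hNQ hN0
  have hrem := natCast_mod_pow_div_le (by omega) hqL
  rw [hQ]
  refine hdiff.trans ?_
  rw [mul_div_assoc, div_eq_mul_one_div (2 : ℝ)]
  linarith
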